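/- Under the echo condition and stationarity of y(0), the second-order term (coefficient of t²) of the short-time expansion of the decoherence function vanishes. -/

import Mathlib

open Matrix Finset

/-- The decoherence function of a qubit under an `N`-pulse dynamical decoupling
sequence with normalized intervals `a`, rate matrix `Γ`, field values `w`, and
initial distribution `y0`. -/
noncomputable def decoherenceFn {N M : ℕ} (Γ : Matrix (Fin M) (Fin M) ℝ)
    (w : Fin M → ℝ) (y0 : Fin M → ℝ) (a : Fin (N + 1) → ℝ) (t : ℝ) : ℂ :=
  ∑ j, (((List.ofFn fun n : Fin (N + 1) =>
      NormedSpace.exp ((a n * t) •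
        ((Γ.map (Complex.ofReal)) +
          ((-1 : ℝ) ^ (n : ℕ)) • (Complex.I • Matrix.diagonal fun j => (w j : ℂ))))).reverse.prod).mulVec
      (fun j => (y0 j : ℂ))) j

/-!
Write the `n`-th generator as `Aₙ = aₙ • (Γ + sₙ • iW)` with `sₙ = (-1)ⁿ`, and `φ X = 1ᵀ X y(0)`.
The second derivative at `0` of `t ↦ ∏ exp (t • Aₙ)` is `∑ Aₙ² + 2 ∑_{m<n} Aₘ Aₙ`, a sum of words
of length two. In `φ (Aₘ Aₙ)` every word containing `Γ` has `Γ` at one end, where it is killed by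
`1ᵀ Γ = 0` or by `Γ y(0) = 0`; hence `φ (Aₘ Aₙ) = (sₘ aₘ) (sₙ aₙ) φ ((iW)²)`, and the second
derivative of the decoherence function is `(∑ sₙ aₙ)² φ ((iW)²) = 0` by the echo condition.
-/

open NormedSpace

theorem iteratedDeriv_two_eq_of_hasDerivAt {𝕜 F : Type*} [NontriviallyNormedField 𝕜]
    [NormedAddCommGroup F] [NormedSpace 𝕜 F] {f f' : 𝕜 → F} {f'' : F} {x : 𝕜}
    (hf : ∀ t, HasDerivAt f (f' t) t) (hf' : HasDerivAt f' f'' x) :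
    iteratedDeriv 2 f x = f'' := by
  rw [iteratedDeriv_succ, iteratedDeriv_one, funext fun t => (hf t).deriv, hf'.deriv]

/-- The second derivative of `expProd l` at `0`. -/
def expProdDeriv2 {𝔸 : Type*} [Ring 𝔸] : List 𝔸 → 𝔸
  | [] => 0
  | A :: l => A * A + (A * l.sum + A * l.sum) + expProdDeriv2 l

section ExpProd

variable {𝔸 : Type*} [NormedRing 𝔸] [NormedAlgebra ℝ 𝔸]

noncomputable def expProd (l : List 𝔸) (t : ℝ) : 𝔸 :=
  (l.map fun A => exp (t • A)).prod

noncomputable def expProdDeriv : List 𝔸 → ℝ → 𝔸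
  | [], _ => 0
  | A :: l, t => A * exp (t • A) * expProd l t + exp (t • A) * expProdDeriv l t

@[simp]
theorem expProd_cons (A : 𝔸) (l : List 𝔸) (t : ℝ) :
    expProd (A :: l) t = exp (t • A) * expProd l t := rfl

@[simp]
theorem expProd_zero (l : List 𝔸) : expProd l 0 = 1 := by
  simp [expProd]

@[simp]
theorem expProdDeriv_zero (l : List 𝔸) : expProdDeriv l 0 = l.sum := by
  induction l with
  | nil => rfl
  | cons A l ih => simp [expProdDeriv, ih]

variable [CompleteSpace 𝔸]

theorem hasDerivAt_expProd (l : List 𝔸) (t : ℝ) :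
    HasDerivAt (expProd l) (expProdDeriv l t) t := by
  induction l with
  | nil => exact hasDerivAt_const t (1 : 𝔸)
  | cons A l ih => exact (hasDerivAt_exp_smul_const' A t).mul ih

theorem hasDerivAt_expProdDeriv_zero (l : List 𝔸) :
    HasDerivAt (expProdDeriv l) (expProdDeriv2 l) 0 := by
  induction l with
  | nil => exact hasDerivAt_const (0 : ℝ) (0 : 𝔸)
  | cons A l ih =>
    have h := (((hasDerivAt_exp_smul_const' A (0 : ℝ)).const_mul A).mul
      (hasDerivAt_expProd l 0)).add ((hasDerivAt_exp_smul_const' A (0 : ℝ)).mul ih)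
    refine (show HasDerivAt (expProdDeriv (A :: l)) _ 0 from h).congr_deriv ?_
    simp [expProdDeriv2, add_assoc]

theorem iteratedDeriv_two_clm_comp_expProd_zero {V : Type*} [NormedAddCommGroup V]
    [NormedSpace ℝ V] (φ : 𝔸 →L[ℝ] V) (l : List 𝔸) :
    iteratedDeriv 2 (fun t => φ (expProd l t)) 0 = φ (expProdDeriv2 l) :=
  iteratedDeriv_two_eq_of_hasDerivAt
    (fun t => φ.hasFDerivAt.comp_hasDerivAt t (hasDerivAt_expProd l t))
    (φ.hasFDerivAt.comp_hasDerivAt 0 (hasDerivAt_expProdDeriv_zero l))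

end ExpProd

section RankOne

variable {𝔸 V F : Type*}

theorem map_expProdDeriv2_map [Ring 𝔸] [AddCommGroup V] [Module ℝ V] [FunLike F 𝔸 V]
    [AddMonoidHomClass F 𝔸 V] (φ : F) {ι : Type*} (A : ι → 𝔸) (β : ι → ℝ) (v : V)
    (hφ : ∀ i j, φ (A i * A j) = (β i * β j) • v) (l : List ι) :
    φ (expProdDeriv2 (l.map A)) = (l.map β).sum ^ 2 • v := by
  have hsum : ∀ i (l : List ι), φ (A i * (l.map A).sum) = (β i * (l.map β).sum) • v := by
    intro i l
    induction l with
    | nil => simp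
    | cons j l ih => simp [mul_add, hφ, ih, add_smul]
  induction l with
  | nil => simp [expProdDeriv2]
  | cons i l ih =>
    simp only [List.map_cons, expProdDeriv2, List.sum_cons, map_add, hφ, hsum, ih, ← add_smul]
    ring_nf

theorem map_smul_add_smul_mul_smul_add_smul {R : Type*} [CommSemiring R] [Semiring 𝔸]
    [Algebra R 𝔸] [AddCommMonoid V] [Module R V] [FunLike F 𝔸 V] [LinearMapClass F R 𝔸 V]
    (φ : F) {G K : 𝔸} (hleft : ∀ X, φ (G * X) = 0) (hright : ∀ X, φ (X * G) = 0)
    (a s a' s' : R) :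
    φ ((a • (G + s • K)) * (a' • (G + s' • K))) = (s * a * (s' * a')) • φ (K * K) := by
  simp only [smul_add, add_mul, mul_add, smul_mul_assoc, mul_smul_comm, map_add, map_smul,
    hleft, hright, smul_zero, zero_add, smul_smul]
  congr 1
  ring

end RankOne

attribute [local instance] Matrix.linftyOpNormedRing Matrix.linftyOpNormedAlgebra

section SumMulVec

variable {n : Type*} [Fintype n]

noncomputable def sumMulVec (y : n → ℂ) : Matrix n n ℂ →L[ℝ] ℂ :=
  LinearMap.toContinuousLinearMap
    { toFun := fun X => ∑ j, (X *ᵥ y) j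
      map_add' := fun X Y => by simp [add_mulVec, sum_add_distrib]
      map_smul' := fun r X => by simp [smul_mulVec, smul_sum] }

theorem sumMulVec_apply (y : n → ℂ) (X : Matrix n n ℂ) :
    sumMulVec y X = ∑ j, (X *ᵥ y) j := rfl

theorem sumMulVec_eq_vecMul_dotProduct (y : n → ℂ) (X : Matrix n n ℂ) :
    sumMulVec y X = (1 ᵥ* X) ⬝ᵥ y := by
  rw [sumMulVec_apply, ← one_dotProduct, dotProduct_mulVec]

theorem sumMulVec_mul_left_eq_zero (y : n → ℂ) {G : Matrix n n ℂ} (hG : 1 ᵥ* G = 0)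
    (X : Matrix n n ℂ) : sumMulVec y (G * X) = 0 := by
  rw [sumMulVec_eq_vecMul_dotProduct, ← vecMul_vecMul, hG, zero_vecMul, zero_dotProduct]

theorem sumMulVec_mul_right_eq_zero {y : n → ℂ} {G : Matrix n n ℂ} (hG : G *ᵥ y = 0)
    (X : Matrix n n ℂ) : sumMulVec y (X * G) = 0 := by
  rw [sumMulVec_apply, ← mulVec_mulVec, hG, mulVec_zero]
  simp

end SumMulVec

noncomputable def pulseGenerator {N M : ℕ} (Γ : Matrix (Fin M) (Fin M) ℝ) (w : Fin M → ℝ)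
    (a : Fin (N + 1) → ℝ) (n : Fin (N + 1)) : Matrix (Fin M) (Fin M) ℂ :=
  a n • (Γ.map Complex.ofReal + ((-1 : ℝ) ^ (n : ℕ)) • (Complex.I • diagonal fun j => (w j : ℂ)))

theorem decoherenceFn_eq_sumMulVec_expProd {N M : ℕ} (Γ : Matrix (Fin M) (Fin M) ℝ)
    (w y0 : Fin M → ℝ) (a : Fin (N + 1) → ℝ) (t : ℝ) :
    decoherenceFn Γ w y0 a t = sumMulVec (fun j => (y0 j : ℂ))
      (expProd ((List.finRange (N + 1)).reverse.map (pulseGenerator Γ w a)) t) := by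
  simp only [decoherenceFn, sumMulVec_apply, expProd, List.map_reverse, List.map_map, List.ofFn_eq_map]
  simp only [Function.comp_def, pulseGenerator, smul_smul, mul_comm _ t]
  rfl

theorem sumMulVec_pulseGenerator_mul_pulseGenerator {N M : ℕ} {Γ : Matrix (Fin M) (Fin M) ℝ}
    (hΓ : ∀ k, ∑ j, Γ j k = 0) (w : Fin M → ℝ) {y0 : Fin M → ℝ} (hstat : Γ *ᵥ y0 = 0)
    (a : Fin (N + 1) → ℝ) (m n : Fin (N + 1)) :
    sumMulVec (fun j => (y0 j : ℂ)) (pulseGenerator Γ w a m * pulseGenerator Γ w a n) =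
      ((-1 : ℝ) ^ (m : ℕ) * a m * ((-1 : ℝ) ^ (n : ℕ) * a n)) •
        sumMulVec (fun j => (y0 j : ℂ))
          ((Complex.I • diagonal fun j => (w j : ℂ)) * (Complex.I • diagonal fun j => (w j : ℂ))) := by
  have hleft : 1 ᵥ* Γ.map Complex.ofReal = 0 := by
    ext k
    simp [vecMul, dotProduct, ← Complex.ofReal_sum, hΓ]
  have hright : Γ.map Complex.ofReal *ᵥ (fun j => (y0 j : ℂ)) = 0 := by
    ext j
    have h := RingHom.map_mulVec Complex.ofRealHom Γ y0 j
    rw [hstat] at h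
    exact h.symm.trans (map_zero _)
  exact map_smul_add_smul_mul_smul_add_smul _ (sumMulVec_mul_left_eq_zero _ hleft)
    (sumMulVec_mul_right_eq_zero hright) _ _ _ _

theorem second_order_term_vanishes_general {N M : ℕ}
    (Γ : Matrix (Fin M) (Fin M) ℝ) (hΓ : ∀ k, ∑ j, Γ j k = 0)
    (w : Fin M → ℝ)
    (y0 : Fin M → ℝ)
    (hstat : Γ.mulVec y0 = 0)
    (a : Fin (N + 1) → ℝ)
    (hecho : ∑ n : Fin (N + 1), (-1 : ℝ) ^ (n : ℕ) * a n = 0) :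
    iteratedDeriv 2 (fun t => decoherenceFn Γ w y0 a t) 0 = 0 := by
  simp_rw [decoherenceFn_eq_sumMulVec_expProd]
  refine (iteratedDeriv_two_clm_comp_expProd_zero _ _).trans ?_
  refine (map_expProdDeriv2_map _ _ _ _
    (sumMulVec_pulseGenerator_mul_pulseGenerator hΓ w hstat a) _).trans ?_
  rw [List.map_reverse, List.sum_reverse, ← Fin.sum_univ_def, hecho, sq, zero_mul, zero_smul]

/-- Under the echo condition, the second-order term (coefficient of `t²`) of the
short-time expansion of the decoherence function vanishes. -/
theorem second_order_term_vanishes {N M : ℕ}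
    (Γ : Matrix (Fin M) (Fin M) ℝ) (hΓ : ∀ k, ∑ j, Γ j k = 0)
    (w : Fin M → ℝ)
    (y0 : Fin M → ℝ) (hy0 : ∀ j, 0 ≤ y0 j) (hy0sum : ∑ j, y0 j = 1)
    (hstat : Γ.mulVec y0 = 0)
    (a : Fin (N + 1) → ℝ) (ha : ∀ n, 0 ≤ a n) (hasum : ∑ n, a n = 1)
    (hecho : ∑ n : Fin (N + 1), (-1 : ℝ) ^ (n : ℕ) * a n = 0) :
    iteratedDeriv 2 (fun t => decoherenceFn Γ w y0 a t) 0 = 0 :=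
  second_order_term_vanishes_general Γ hΓ w y0 hstat a hecho
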